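/- Let P be a symmetric idempotent real n×n matrix, M a symmetric positive definite real n×n matrix, μ > 0, M̄ = P M P + μ (I − P), S = I − M M̄⁻¹ P, and let Λ be a real n×n matrix with P Λ = 0 and Λᵀ P = 0. Suppose vectors v, a, f, f_g, f_c and a matrix C satisfy: P v = v (constraint on velocity), (I − P) a = (Λ P + P Λᵀ) v (differentiated constraint on acceleration), P f_c = 0 (the constraint force is annihilated by P), and M a + C v = f_g + f_c + f (the dynamics equation). Then the generalized acceleration is uniquely given by a = M̄⁻¹ P (f + f_g − C v) + Sᵀ Λ v. -/

import Mathlib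

/-!
Since `Λᵀ P v = Λᵀ P (P v) = 0`, the differentiated constraint says `(1 - P) a = Λ v`, so
`a = P a + Λ v` and only `P a` is unknown. The constraint inertia `M̄` agrees with `P M P` on the
range of `P` and commutes with `P`, hence `M̄⁻¹ P M P = P`; it is invertible because
`xᵀ M̄ x = (P x)ᵀ M (P x) + μ ‖(1 - P) x‖²`. Thus `P a = M̄⁻¹ P M (a - Λ v)`, and by symmetry
`Sᵀ = 1 - M̄⁻¹ P M`, so `a = M̄⁻¹ P M a + Sᵀ Λ v`. Projecting the dynamics with `P` removes
`f_c` and turns `P M a` into `P (f + f_g - C v)`.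
-/

open Matrix

namespace Matrix

variable {ι R : Type*} [Fintype ι]

theorem IsSymm.dotProduct_mulVec [CommRing R] {A : Matrix ι ι R} (hA : A.IsSymm)
    (x y : ι → R) : x ⬝ᵥ A *ᵥ y = A *ᵥ x ⬝ᵥ y := by
  rw [Matrix.dotProduct_mulVec, ← hA.eq, vecMul_transpose, hA.eq]

theorem dotProduct_mulVec_self_eq_of_isSymm_of_isIdempotentElem [CommRing R]
    {P : Matrix ι ι R} (hsymm : P.IsSymm) (hidem : IsIdempotentElem P) (x : ι → R) :
    x ⬝ᵥ P *ᵥ x = P *ᵥ x ⬝ᵥ P *ᵥ x := by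
  conv_lhs => rw [← hidem.eq, ← mulVec_mulVec]
  exact hsymm.dotProduct_mulVec _ _

variable [DecidableEq ι]

theorem commute_nonsing_inv_right [CommRing R] {A B : Matrix ι ι R} (h : Commute A B) :
    Commute A B⁻¹ := by
  by_cases hB : IsUnit B.det
  · exact h.units_inv_right (u := B.nonsingInvUnit hB)
  · rw [nonsing_inv_apply_not_isUnit B hB]
    exact Commute.zero_right A

def constraintInertia [CommRing R] (P M : Matrix ι ι R) (μ : R) : Matrix ι ι R :=
  P * M * P + μ • (1 - P)

section CommRing

variable [CommRing R] {P M : Matrix ι ι R} {μ : R}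

theorem constraintInertia_mul_self (hP : IsIdempotentElem P) :
    constraintInertia P M μ * P = P * M * P := by
  simp [constraintInertia, add_mul, sub_mul, Matrix.mul_assoc, hP.eq]

theorem self_mul_constraintInertia (hP : IsIdempotentElem P) :
    P * constraintInertia P M μ = P * M * P := by
  simp [constraintInertia, mul_add, mul_sub, ← Matrix.mul_assoc, hP.eq]

theorem commute_constraintInertia (hP : IsIdempotentElem P) :
    Commute P (constraintInertia P M μ) :=
  (self_mul_constraintInertia hP).trans (constraintInertia_mul_self hP).symm

theorem isSymm_constraintInertia (hP : P.IsSymm) (hM : M.IsSymm) :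
    (constraintInertia P M μ).IsSymm := by
  simp [constraintInertia, IsSymm, transpose_mul, hP.eq, hM.eq, Matrix.mul_assoc]

theorem constraintInertia_inv_mul_mul_mul_self (hP : IsIdempotentElem P)
    (h : IsUnit (constraintInertia P M μ).det) :
    (constraintInertia P M μ)⁻¹ * (P * M * P) = P := by
  rw [← constraintInertia_mul_self hP, ← Matrix.mul_assoc, nonsing_inv_mul _ h, Matrix.one_mul]

theorem transpose_one_sub_mul_constraintInertia_inv_mul (hPsymm : P.IsSymm)
    (hPidem : IsIdempotentElem P) (hM : M.IsSymm) :
    (1 - M * (constraintInertia P M μ)⁻¹ * P)ᵀ =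
      1 - (constraintInertia P M μ)⁻¹ * P * M := by
  rw [transpose_sub, transpose_one, transpose_mul, transpose_mul, transpose_nonsing_inv,
    hPsymm.eq, hM.eq, (isSymm_constraintInertia hPsymm hM).eq,
    ← Matrix.mul_assoc, (commute_nonsing_inv_right (commute_constraintInertia hPidem)).eq]

theorem eq_mulVec_add_mulVec_of_sub_mulVec_eq {Λ : Matrix ι ι R} {v a : ι → R}
    (hv : P *ᵥ v = v) (hΛ : Λᵀ * P = 0)
    (hacc : (1 - P) *ᵥ a = (Λ * P + P * Λᵀ) *ᵥ v) :
    a = P *ᵥ a + Λ *ᵥ v := by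
  have hΛv : Λᵀ *ᵥ v = 0 := by rw [← hv, mulVec_mulVec, hΛ, zero_mulVec]
  rw [sub_mulVec, one_mulVec, add_mulVec, ← mulVec_mulVec, hv, ← mulVec_mulVec, hΛv,
    mulVec_zero, add_zero] at hacc
  rw [← hacc, add_sub_cancel]

theorem eq_constraintInertia_inv_mul_mulVec_add (hPsymm : P.IsSymm)
    (hPidem : IsIdempotentElem P) (hM : M.IsSymm) (h : IsUnit (constraintInertia P M μ).det)
    {Λ : Matrix ι ι R} {v a : ι → R} (ha : a = P *ᵥ a + Λ *ᵥ v) :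
    a = ((constraintInertia P M μ)⁻¹ * P) *ᵥ (M *ᵥ a)
      + ((1 - M * (constraintInertia P M μ)⁻¹ * P)ᵀ * Λ) *ᵥ v := by
  set Mbar := constraintInertia P M μ
  have hPa : P *ᵥ a = a - Λ *ᵥ v := eq_sub_of_add_eq ha.symm
  calc a = P *ᵥ a + Λ *ᵥ v := ha
    _ = (Mbar⁻¹ * (P * M * P)) *ᵥ a + Λ *ᵥ v := by
      rw [constraintInertia_inv_mul_mul_mul_self hPidem h]
    _ = (Mbar⁻¹ * P * M) *ᵥ (a - Λ *ᵥ v) + Λ *ᵥ v := by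
      rw [← hPa, mulVec_mulVec, ← Matrix.mul_assoc, ← Matrix.mul_assoc]
    _ = _ := by
      rw [transpose_one_sub_mul_constraintInertia_inv_mul hPsymm hPidem hM]
      simp only [mulVec_sub, sub_mul, sub_mulVec, one_mul, mulVec_mulVec, Matrix.mul_assoc]
      abel

end CommRing

theorem posDef_constraintInertia {P M : Matrix ι ι ℝ} {μ : ℝ} (hPsymm : P.IsSymm)
    (hPidem : IsIdempotentElem P) (hM : M.PosDef) (hμ : 0 < μ) :
    (constraintInertia P M μ).PosDef := by
  refine .of_dotProduct_mulVec_pos ?_ fun x hx => ?_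
  · exact isHermitian_iff_isSymm.2 <|
      isSymm_constraintInertia hPsymm (isHermitian_iff_isSymm.1 hM.isHermitian)
  have hQsymm : (1 - P).IsSymm := isSymm_one.sub hPsymm
  have hsplit : x ⬝ᵥ constraintInertia P M μ *ᵥ x
      = P *ᵥ x ⬝ᵥ M *ᵥ (P *ᵥ x) + μ * ((1 - P) *ᵥ x ⬝ᵥ (1 - P) *ᵥ x) := by
    rw [constraintInertia, add_mulVec, dotProduct_add, ← mulVec_mulVec, ← mulVec_mulVec,
      hPsymm.dotProduct_mulVec, smul_mulVec, dotProduct_smul, smul_eq_mul,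
      dotProduct_mulVec_self_eq_of_isSymm_of_isIdempotentElem hQsymm hPidem.one_sub]
  rw [star_trivial, hsplit]
  have hQx_nonneg : 0 ≤ (1 - P) *ᵥ x ⬝ᵥ (1 - P) *ᵥ x :=
    Fintype.sum_nonneg fun _ => mul_self_nonneg _
  by_cases hPx : P *ᵥ x = 0
  · have hQx : (1 - P) *ᵥ x = x := by rw [sub_mulVec, hPx, one_mulVec, sub_zero]
    rw [hPx, mulVec_zero, dotProduct_zero, zero_add, hQx]
    exact mul_pos hμ <| (Fintype.sum_nonneg fun _ => mul_self_nonneg _).lt_of_ne'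
      (mt dotProduct_self_eq_zero.1 hx)
  · simpa [star_trivial] using
      add_pos_of_pos_of_nonneg (hM.dotProduct_mulVec_pos hPx) (mul_nonneg hμ.le hQx_nonneg)

end Matrix

theorem stmt_18_general (n : ℕ)
    (P M : Matrix (Fin n) (Fin n) ℝ)
    (hPsymm : Pᵀ = P) (hPidem : P * P = P)
    (hM : M.PosDef) (μ : ℝ) (hμ : 0 < μ)
    (Mbar S Λ C : Matrix (Fin n) (Fin n) ℝ)
    (hMbar : Mbar = P * M * P + μ • ((1 : Matrix (Fin n) (Fin n) ℝ) - P))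
    (hS : S = 1 - M * Mbar⁻¹ * P)
    (hΛ2 : Λᵀ * P = 0)
    (v a f f_g f_c : Fin n → ℝ)
    (hv : P.mulVec v = v)
    (hacc : ((1 : Matrix (Fin n) (Fin n) ℝ) - P).mulVec a = (Λ * P + P * Λᵀ).mulVec v)
    (hfc : P.mulVec f_c = 0)
    (hdyn : M.mulVec a + C.mulVec v = f_g + f_c + f) :
    a = (Mbar⁻¹ * P).mulVec (f + f_g - C.mulVec v) + (Sᵀ * Λ).mulVec v := by
  replace hMbar : Mbar = constraintInertia P M μ := hMbar
  subst hMbar hS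
  have hMsymm : M.IsSymm := isHermitian_iff_isSymm.1 hM.isHermitian
  have hunit : IsUnit (constraintInertia P M μ).det :=
    (isUnit_iff_isUnit_det _).1 (posDef_constraintInertia hPsymm hPidem hM hμ).isUnit
  have hPMa : P *ᵥ (M *ᵥ a) = P *ᵥ (f + f_g - C *ᵥ v) := by
    rw [eq_sub_of_add_eq hdyn, mulVec_sub, mulVec_sub, mulVec_add, mulVec_add, hfc, add_zero,
      mulVec_add, add_comm (P *ᵥ f)]
  conv_lhs => rw [eq_constraintInertia_inv_mul_mulVec_add hPsymm hPidem hMsymm hunit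
    (eq_mulVec_add_mulVec_of_sub_mulVec_eq hv hΛ2 hacc)]
  rw [← mulVec_mulVec, hPMa, mulVec_mulVec]

/-- Closed-form generalized acceleration of the constrained system: under the velocity
constraint `P v = v`, the differentiated constraint `(I - P) a = (ΛP + PΛᵀ) v`, the
annihilation `P f_c = 0` and the dynamics `M a + C v = f_g + f_c + f`, the acceleration
is `a = M̄⁻¹ P (f + f_g - C v) + Sᵀ Λ v`. -/
theorem stmt_18 (n : ℕ)
    (P M : Matrix (Fin n) (Fin n) ℝ)
    (hPsymm : Pᵀ = P) (hPidem : P * P = P)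
    (hM : M.PosDef) (μ : ℝ) (hμ : 0 < μ)
    (Mbar S Λ C : Matrix (Fin n) (Fin n) ℝ)
    (hMbar : Mbar = P * M * P + μ • ((1 : Matrix (Fin n) (Fin n) ℝ) - P))
    (hS : S = 1 - M * Mbar⁻¹ * P)
    (hΛ1 : P * Λ = 0) (hΛ2 : Λᵀ * P = 0)
    (v a f f_g f_c : Fin n → ℝ)
    (hv : P.mulVec v = v)
    (hacc : ((1 : Matrix (Fin n) (Fin n) ℝ) - P).mulVec a = (Λ * P + P * Λᵀ).mulVec v)
    (hfc : P.mulVec f_c = 0)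
    (hdyn : M.mulVec a + C.mulVec v = f_g + f_c + f) :
    a = (Mbar⁻¹ * P).mulVec (f + f_g - C.mulVec v) + (Sᵀ * Λ).mulVec v :=
  stmt_18_general n P M hPsymm hPidem hM μ hμ Mbar S Λ C hMbar hS hΛ2 v a f f_g f_c hv hacc hfc hdyn
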